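/- arXiv:math/0401143 — 6 statements merged into one kernel-verified Lean document; each statement's English description precedes it below -/
import Mathlib

section
/- Let β: [0,1] → ℝ be C¹ with β(t) = ∑_{k≥1} β_k t^k, β_k ≥ 0, ∑ k β_k < ∞, and β twice differentiable at t* where t* = inf{t ≥ 0 : β'(t) + log(1-t) < 0} ∈ [0,1). Then (1 - t*) · β''(t*) ≤ 1. -/
/-! Put `f t = β' t + log (1 - t)`. Then `f 0 = β₁ ≥ 0` and `f ≥ 0` on `[0, t*)`, so
`f t* ≥ 0` by continuity; but `t*` is a limit from the right of points where `f < 0` (such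
points exist since `β' ≤ ∑ k β_k` on `[0, 1)` while `log (1 - t) → -∞`). Hence
`f' t* = β'' t* - 1 / (1 - t*) ≤ 0`. -/

open Real Set

section PowerSeries

variable {a : ℕ → ℝ}

theorem hasDerivAt_tsum_mul_pow (ha : Summable fun k : ℕ => (k : ℝ) * |a k|) {t : ℝ}
    (ht : t ∈ Ioo (-1 : ℝ) 1) :
    HasDerivAt (fun t => ∑' k : ℕ, a k * t ^ k)
      (∑' k : ℕ, (k : ℝ) * a k * t ^ (k - 1)) t := by
  refine hasDerivAt_tsum_of_isPreconnected (g := fun k t => a k * t ^ k)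
    (g' := fun k t => (k : ℝ) * a k * t ^ (k - 1)) ha isOpen_Ioo
    (convex_Ioo (-1 : ℝ) 1).isPreconnected (fun k x _ => ?_) (fun k x hx => ?_)
    (by norm_num : (0 : ℝ) ∈ Ioo (-1 : ℝ) 1) ?_ ht
  · rw [mul_comm (k : ℝ), mul_assoc]
    exact (hasDerivAt_pow k x).const_mul (a k)
  · have hx1 : |x| ^ (k - 1) ≤ 1 := pow_le_one₀ (abs_nonneg x) (abs_lt.mpr hx).le
    rw [norm_mul, norm_mul, norm_pow, Real.norm_natCast, Real.norm_eq_abs, Real.norm_eq_abs]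
    exact mul_le_of_le_one_right (by positivity) hx1
  · exact summable_of_ne_finset_zero (s := {0}) fun k hk => by
      simp [zero_pow (Finset.notMem_singleton.mp hk)]

variable (hnn : ∀ k, 0 ≤ a k) (hsum : Summable fun k : ℕ => (k : ℝ) * a k)
include hnn hsum

theorem deriv_tsum_mul_pow_mem_Icc {t : ℝ} (ht : t ∈ Ico (0 : ℝ) 1) :
    deriv (fun t => ∑' k : ℕ, a k * t ^ k) t ∈ Icc 0 (∑' k : ℕ, (k : ℝ) * a k) := by
  have habs : Summable fun k : ℕ => (k : ℝ) * |a k| := by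
    simpa only [abs_of_nonneg (hnn _)] using hsum
  rw [(hasDerivAt_tsum_mul_pow habs ⟨by linarith [ht.1], ht.2⟩).deriv]
  have hterm : ∀ k : ℕ, (k : ℝ) * a k * t ^ (k - 1) ∈ Icc 0 ((k : ℝ) * a k) := fun k =>
    ⟨mul_nonneg (mul_nonneg k.cast_nonneg (hnn k)) (pow_nonneg ht.1 _),
      mul_le_of_le_one_right (mul_nonneg k.cast_nonneg (hnn k)) (pow_le_one₀ ht.1 ht.2.le)⟩
  have hsum' : Summable fun k : ℕ => (k : ℝ) * a k * t ^ (k - 1) :=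
    hsum.of_nonneg_of_le (fun k => (hterm k).1) (fun k => (hterm k).2)
  exact ⟨tsum_nonneg fun k => (hterm k).1, hsum'.tsum_le_tsum (fun k => (hterm k).2) hsum⟩

end PowerSeries

theorem exists_nonneg_add_log_one_sub_neg {g : ℝ → ℝ} {C : ℝ}
    (hg : ∀ t ∈ Ico (0 : ℝ) 1, g t ≤ C) : ∃ t, 0 ≤ t ∧ g t + log (1 - t) < 0 := by
  have hexp : exp (-(|C| + 1)) < 1 := exp_lt_one_iff.mpr (by linarith [abs_nonneg C])
  refine ⟨1 - exp (-(|C| + 1)), by linarith, ?_⟩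
  have hgt := hg (1 - exp (-(|C| + 1))) ⟨by linarith, by linarith [exp_pos (-(|C| + 1))]⟩
  rw [sub_sub_cancel, log_exp]
  linarith [le_abs_self C]

section FirstCrossing

variable {f : ℝ → ℝ} {a s : ℝ}

theorem IsGLB.nonneg_of_setOf_neg (hS : IsGLB {t | a ≤ t ∧ f t < 0} s) (ha : 0 ≤ f a)
    (hf : ContinuousWithinAt f (Iio s) s) : 0 ≤ f s := by
  rcases (hS.2 fun _ ht => ht.1 : a ≤ s).eq_or_lt with rfl | has
  · exact ha
  refine ge_of_tendsto hf ?_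
  filter_upwards [Ioo_mem_nhdsLT has] with x hx
  exact not_lt.mp fun hneg => hx.2.not_ge (hS.1 ⟨hx.1.le, hneg⟩)

theorem HasDerivAt.nonpos_of_isGLB_setOf_neg {f' : ℝ} (hS : IsGLB {t | a ≤ t ∧ f t < 0} s)
    (hne : {t | a ≤ t ∧ f t < 0}.Nonempty) (ha : 0 ≤ f a) (hf : HasDerivAt f f' s) :
    f' ≤ 0 := by
  have hs := hS.nonneg_of_setOf_neg ha hf.continuousAt.continuousWithinAt
  have hsub : {t | a ≤ t ∧ f t < 0} ⊆ Ioi s := fun t ht =>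
    (hS.1 ht).lt_of_ne fun hst => (hst ▸ ht.2).not_ge hs
  have := mem_closure_iff_nhdsWithin_neBot.mp (hS.mem_closure hne)
  refine le_of_tendsto ((hasDerivAt_iff_tendsto_slope.mp hf).mono_left
    (nhdsWithin_mono _ fun t ht => (hsub ht).ne')) ?_
  filter_upwards [self_mem_nhdsWithin] with t ht
  rw [slope_def_field]
  exact div_nonpos_of_nonpos_of_nonneg (by linarith [ht.2]) (sub_nonneg.mpr (hsub ht).le)

end FirstCrossing

theorem essential_edges_gamma_le_one_general
    (βk : ℕ → ℝ) (hnn : ∀ k, 0 ≤ βk k)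
    (hsum : Summable fun k : ℕ => (k : ℝ) * βk k)
    (β : ℝ → ℝ) (hβ : β = fun t => ∑' k : ℕ, βk k * t ^ k)
    (tstar : ℝ)
    (htstar : tstar = sInf {t : ℝ | 0 ≤ t ∧ deriv β t + Real.log (1 - t) < 0})
    (hts : tstar ∈ Ico (0 : ℝ) 1)
    (h2 : DifferentiableAt ℝ (deriv β) tstar) :
    (1 - tstar) * deriv (deriv β) tstar ≤ 1 := by
  set f : ℝ → ℝ := fun t => deriv β t + Real.log (1 - t)
  have hβ' : ∀ t ∈ Ico (0 : ℝ) 1,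
      deriv β t ∈ Icc 0 (∑' k : ℕ, (k : ℝ) * βk k) := by
    subst hβ; exact fun t ht => deriv_tsum_mul_pow_mem_Icc hnn hsum ht
  have hne : {t | 0 ≤ t ∧ f t < 0}.Nonempty :=
    exists_nonneg_add_log_one_sub_neg fun t ht => (hβ' t ht).2
  have hf0 : 0 ≤ f 0 := by simpa [f] using (hβ' 0 ⟨le_rfl, one_pos⟩).1
  have hfd : HasDerivAt f (deriv (deriv β) tstar - (1 - tstar)⁻¹) tstar := by
    have hlog : HasDerivAt (fun t => Real.log (1 - t)) (-(1 - tstar)⁻¹) tstar := by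
      simpa [neg_div, ← one_div] using
        ((hasDerivAt_id tstar).const_sub 1).log (sub_pos.mpr hts.2).ne'
    exact sub_eq_add_neg (deriv (deriv β) tstar) _ ▸ h2.hasDerivAt.add hlog
  have hglb : IsGLB {t | 0 ≤ t ∧ f t < 0} tstar :=
    htstar ▸ isGLB_csInf hne ⟨0, fun _ ht => ht.1⟩
  have hle := hfd.nonpos_of_isGLB_setOf_neg hglb hne hf0
  rwa [sub_nonpos, inv_eq_one_div, le_div_iff₀' (sub_pos.mpr hts.2)] at hle

/-- If `β(t) = ∑_{k≥1} β_k t^k` with `β_k ≥ 0`, `∑ k β_k < ∞`, `β` is `C¹` on `[0,1]`,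
and `t* = inf {t ≥ 0 : β'(t) + log(1-t) < 0} ∈ [0,1)`, and `β` is twice differentiable
at `t*`, then `(1 - t*) β''(t*) ≤ 1`. -/
theorem essential_edges_gamma_le_one
    (βk : ℕ → ℝ) (hnn : ∀ k, 0 ≤ βk k)
    (hsum : Summable fun k : ℕ => (k : ℝ) * βk k)
    (β : ℝ → ℝ) (hβ : β = fun t => ∑' k : ℕ, βk k * t ^ k)
    (hC1 : ContDiffOn ℝ 1 β (Icc 0 1))
    (tstar : ℝ)
    (htstar : tstar = sInf {t : ℝ | 0 ≤ t ∧ deriv β t + Real.log (1 - t) < 0})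
    (hts : tstar ∈ Ico (0 : ℝ) 1)
    (h2 : DifferentiableAt ℝ (deriv β) tstar) :
    (1 - tstar) * deriv (deriv β) tstar ≤ 1 :=
  essential_edges_gamma_le_one_general βk hnn hsum β hβ tstar htstar hts h2
end

section
/- Let α > 0 and suppose p ∈ (0,1) satisfies αp + log(1-p) = 0 (such p exists uniquely in (0,1) when α > 1). Then the Borel(α) distribution, defined by P(X = n) = e^{-αn}(αn)^{n-1}/n! for n ≥ 1, satisfies ∑_{n≥1} e^{-αn}(αn)^{n-1}/n! = 1 - p. -/
/-
Let `T x = ∑ n^(n-1) xⁿ / n!` be the tree function. Abel's identity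
`∑ₖ C(n,k) k^(k-1) (n-k)^(n-k) = nⁿ`, read through the Cauchy product, gives
`x T'(x) (1 - T x) = T x` for `0 ≤ x < 1/e`, and in particular `T x < 1`. Hence `u = T e^(-T)`
solves `x u' = u` with `u'(0) = 1`, so `u x = x`: `T` inverts `u ↦ u e^(-u)`, which is injective
on `[0, 1]`. For `β = α (1 - p) ∈ (0, 1)` the root equation gives `β e^(-β) = α e^(-α)`, and the
Borel sum equals `T (α e^(-α)) / α = β / α = 1 - p`.
-/

open Real Finset Filter Topology
open scoped Nat

theorem sum_range_neg_one_pow_mul_choose_mul_pow_eq_zero {R : Type*} [CommRing R] {j n : ℕ}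
    (h : j < n) : ∑ i ∈ range (n + 1), (-1 : R) ^ (n - i) * n.choose i * (i : R) ^ j = 0 := by
  have := congrFun (fwdDiff_iter_pow_eq_zero_of_lt (R := R) h) 0
  simpa [fwdDiff_iter_eq_sum_shift, zsmul_eq_mul, eq_comm] using this

noncomputable def abelSum (n : ℕ) (z : ℝ) : ℝ :=
  ∑ k ∈ range n, (n.choose (k + 1) : ℝ) * (k + 1) ^ k * (z - (k + 1)) ^ (n - (k + 1))

theorem hasDerivAt_abelSum (n : ℕ) (z : ℝ) :
    HasDerivAt (abelSum (n + 1)) ((n + 1) * abelSum n z) z := by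
  have hterm : ∀ k ∈ range (n + 1), HasDerivAt
      (fun z => ((n + 1).choose (k + 1) : ℝ) * (k + 1) ^ k * (z - (k + 1)) ^ (n + 1 - (k + 1)))
      ((n + 1) * ((n.choose (k + 1) : ℝ) * (k + 1) ^ k * (z - (k + 1)) ^ (n - (k + 1)))) z := by
    intro k _
    have hchoose : ((n + 1).choose (k + 1) : ℝ) * (n + 1 - (k + 1) : ℕ) =
        (n + 1) * n.choose (k + 1) := by
      rw [mul_comm ((n : ℝ) + 1)]; exact_mod_cast (Nat.choose_mul_succ_eq n (k + 1)).symm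
    refine ((((hasDerivAt_id z).sub_const ((k : ℝ) + 1)).pow (n + 1 - (k + 1))).const_mul
      (((n + 1).choose (k + 1) : ℝ) * (k + 1) ^ k)).congr_deriv ?_
    rw [show n + 1 - (k + 1) - 1 = n - (k + 1) by omega, id, mul_one]
    linear_combination ((k + 1 : ℝ) ^ k * (z - (k + 1)) ^ (n - (k + 1))) * hchoose
  have hextend : abelSum n z = ∑ k ∈ range (n + 1),
      (n.choose (k + 1) : ℝ) * (k + 1) ^ k * (z - (k + 1)) ^ (n - (k + 1)) := by
    simp [abelSum, sum_range_succ]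
  rw [hextend, mul_sum]
  exact HasDerivAt.fun_sum hterm

theorem abelSum_succ_zero {n : ℕ} (hn : n ≠ 0) : abelSum (n + 1) 0 = 0 := by
  have halt := sum_range_neg_one_pow_mul_choose_mul_pow_eq_zero (R := ℝ) (Nat.lt_succ_self n)
  rw [sum_range_succ', Nat.cast_zero, zero_pow hn, mul_zero, add_zero] at halt
  refine (sum_congr rfl fun k hk => ?_).trans halt
  obtain ⟨j, rfl⟩ := Nat.exists_eq_add_of_le (Nat.lt_succ_iff.mp (mem_range.mp hk))
  rw [Nat.add_sub_add_right, Nat.add_sub_cancel_left, zero_sub, neg_pow, pow_add]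
  push_cast
  ring

theorem abelSum_eq (n : ℕ) (z : ℝ) : abelSum n z = n * z ^ (n - 1) := by
  induction n generalizing z with
  | zero => simp [abelSum]
  | succ n ih =>
    rcases Nat.eq_zero_or_pos n with rfl | hn
    · simp [abelSum]
    have hderiv : ∀ z, HasDerivAt (fun z => ((n + 1 : ℕ) : ℝ) * z ^ (n + 1 - 1))
        ((n + 1) * abelSum n z) z := fun z => by
      rw [ih]
      exact ((hasDerivAt_pow n z).const_mul _).congr_deriv (by push_cast; ring)
    exact isOpen_univ.eqOn_of_deriv_eq isPreconnected_univ
      (fun z _ => (hasDerivAt_abelSum n z).differentiableAt.differentiableWithinAt)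
      (fun z _ => (hderiv z).differentiableAt.differentiableWithinAt)
      (fun z _ => by rw [(hasDerivAt_abelSum n z).deriv, (hderiv z).deriv]) (Set.mem_univ 0)
      (by simp [abelSum_succ_zero hn.ne', zero_pow hn.ne']) (Set.mem_univ z)

theorem summable_norm_mul_pow_of_abs_le_exp_one_pow {c : ℕ → ℝ} (hc : ∀ n, |c n| ≤ exp 1 ^ n)
    {x : ℝ} (hx : |x| < exp (-1)) : Summable fun n => ‖c n * x ^ n‖ := by
  have hq : exp 1 * |x| < 1 := by
    rwa [← lt_div_iff₀' (exp_pos 1), one_div, ← exp_neg]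
  refine (summable_geometric_of_lt_one (by positivity) hq).of_nonneg_of_le (fun _ => norm_nonneg _)
    fun n => ?_
  rw [norm_mul, norm_pow, Real.norm_eq_abs, Real.norm_eq_abs, mul_pow]
  exact mul_le_mul_of_nonneg_right (hc n) (by positivity)

theorem hasDerivAt_tsum_mul_pow_s3 {c : ℕ → ℝ} {r x : ℝ} (hc : Summable fun n => |c n| * n * r ^ n)
    (hx : |x| < r) :
    HasDerivAt (fun y => ∑' n, c n * y ^ n) (∑' n, c n * (n * x ^ (n - 1))) x := by
  have hr : 0 < r := (abs_nonneg x).trans_lt hx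
  have hbound : ∀ n, ∀ y ∈ Set.Ioo (-r) r, ‖c n * (n * y ^ (n - 1))‖ ≤ |c n| * n * r ^ n / r := by
    intro n y hy
    rw [norm_mul, norm_mul, norm_pow, Real.norm_natCast, Real.norm_eq_abs, Real.norm_eq_abs]
    cases n with
    | zero => simp
    | succ n =>
      rw [Nat.add_sub_cancel, pow_succ, mul_div_assoc, mul_div_cancel_right₀ _ hr.ne', ← mul_assoc]
      gcongr
      exact (abs_lt.mpr hy).le
  refine hasDerivAt_tsum_of_isPreconnected (hc.div_const r) isOpen_Ioo isPreconnected_Ioo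
    (fun n y _ => (hasDerivAt_pow n y).const_mul (c n)) hbound (y₀ := 0) ⟨by linarith, hr⟩ ?_
    (abs_lt.mp hx)
  exact summable_of_ne_finset_zero (s := {0}) fun n hn => by
    simp [zero_pow (by simpa using hn : n ≠ 0)]

theorem eq_mul_of_hasDerivAt_eq_div {f : ℝ → ℝ} {L r : ℝ} (hf0 : f 0 = 0)
    (hL : HasDerivAt f L 0) (hf : ∀ x ∈ Set.Ioo 0 r, HasDerivAt f (f x / x) x) {x : ℝ}
    (hx : x ∈ Set.Ioo 0 r) : f x = L * x := by
  have hquot : ∀ y ∈ Set.Ioo 0 r, HasDerivAt (fun y => f y / y) 0 y := fun y hy =>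
    ((hf y hy).div (hasDerivAt_id y) hy.1.ne').congr_deriv
      (by rw [id, div_mul_cancel₀ _ hy.1.ne', mul_one, sub_self, zero_div])
  obtain ⟨c, hc⟩ := isOpen_Ioo.exists_is_const_of_deriv_eq_zero isPreconnected_Ioo
    (fun y hy => (hquot y hy).differentiableAt.differentiableWithinAt)
    (fun y hy => (hquot y hy).deriv)
  have hslope : Tendsto (fun y => f y / y) (𝓝[>] 0) (𝓝 L) :=
    ((hasDerivAt_iff_tendsto_slope.mp hL).mono_left
      (nhdsWithin_mono _ fun y hy => ne_of_gt hy)).congr fun y => by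
        rw [slope_def_field, hf0, sub_zero, sub_zero]
  have hconst : Tendsto (fun y => f y / y) (𝓝[>] 0) (𝓝 c) :=
    tendsto_const_nhds.congr' (eventually_of_mem (Ioo_mem_nhdsGT (hx.1.trans hx.2))
      fun y hy => (hc y hy).symm)
  have := hc x hx
  rw [← tendsto_nhds_unique hconst hslope, ← this, div_mul_cancel₀ _ hx.1.ne']

theorem strictMonoOn_mul_exp_neg : StrictMonoOn (fun u => u * exp (-u)) (Set.Icc 0 1) := by
  refine strictMonoOn_of_deriv_pos (convex_Icc 0 1) (by fun_prop) fun u hu => ?_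
  rw [interior_Icc] at hu
  have hd : HasDerivAt (fun u => u * exp (-u)) ((1 - u) * exp (-u)) u :=
    ((hasDerivAt_id u).mul (hasDerivAt_id u).neg.exp).congr_deriv (by simp only [Pi.neg_apply, id_eq]; ring)
  rw [hd.deriv]
  exact mul_pos (by linarith [hu.2]) (exp_pos _)

-- By cases: `n ^ (n - 1) / n !` would be `1` at `n = 0`.
noncomputable def treeCoeff : ℕ → ℝ
  | 0 => 0
  | n + 1 => (n + 1) ^ n / (n + 1)!

@[simp] theorem treeCoeff_zero : treeCoeff 0 = 0 := rfl

theorem treeCoeff_succ (n : ℕ) : treeCoeff (n + 1) = (n + 1) ^ n / (n + 1)! := rfl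

theorem sum_range_treeCoeff_mul (n : ℕ) :
    ∑ k ∈ range (n + 1), treeCoeff k * ((n - k : ℕ) * treeCoeff (n - k)) =
      (n - 1) * treeCoeff n := by
  rcases n with _ | m
  · simp
  have habel := abelSum_eq (m + 1) (m + 1)
  rw [abelSum] at habel
  rw [sum_range_succ, Nat.choose_self, Nat.sub_self, pow_zero, mul_one, Nat.cast_one, one_mul,
    Nat.add_sub_cancel] at habel
  rw [sum_range_succ', sum_range_succ]
  simp only [Nat.add_sub_add_right, Nat.sub_self, treeCoeff_zero, mul_zero, zero_mul, add_zero,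
    Nat.cast_zero] at habel ⊢
  have hterm : ∀ k ∈ range m, treeCoeff (k + 1) * ((m - k : ℕ) * treeCoeff (m - k)) =
      (m + 1).choose (k + 1) * (k + 1 : ℝ) ^ k * ((m : ℝ) + 1 - (k + 1)) ^ (m - k) /
        (m + 1)! := by
    intro k hk
    obtain ⟨j, rfl⟩ := Nat.exists_eq_add_of_lt (mem_range.mp hk)
    have hfact := Nat.add_choose_mul_factorial_mul_factorial (k + 1) (j + 1)
    have hchoose : ((k + 1 + (j + 1)).choose (j + 1) : ℝ) ≠ 0 :=
      Nat.cast_ne_zero.mpr (Nat.choose_pos (by omega)).ne'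
    rw [show k + j + 1 - k = j + 1 by omega, show k + j + 1 + 1 = k + 1 + (j + 1) by omega,
      Nat.choose_symm_add, ← hfact, treeCoeff_succ, treeCoeff_succ]
    push_cast
    field_simp
    ring
  rw [sum_congr rfl hterm, ← sum_div, eq_sub_of_add_eq habel, treeCoeff_succ]
  push_cast
  ring

theorem treeCoeff_nonneg : ∀ n, 0 ≤ treeCoeff n
  | 0 => le_rfl
  | n + 1 => by rw [treeCoeff_succ]; positivity

theorem treeCoeff_le_natCast_mul (n : ℕ) : treeCoeff n ≤ n * treeCoeff n := by
  cases n with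
  | zero => simp
  | succ n => exact le_mul_of_one_le_left (treeCoeff_nonneg _) (by simp)

theorem natCast_mul_treeCoeff_le (n : ℕ) : n * treeCoeff n ≤ exp 1 ^ n := by
  cases n with
  | zero => simp
  | succ n =>
    calc ((n + 1 : ℕ) : ℝ) * treeCoeff (n + 1) = ((n + 1 : ℕ) : ℝ) ^ (n + 1) / (n + 1)! := by
          rw [treeCoeff_succ]; push_cast; ring
      _ ≤ exp (n + 1 : ℕ) := pow_div_factorial_le_exp _ (Nat.cast_nonneg _) _
      _ = exp 1 ^ (n + 1) := by rw [← exp_nat_mul, mul_one]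

noncomputable def treeFun (x : ℝ) : ℝ := ∑' n, treeCoeff n * x ^ n

section treeFun

variable {x : ℝ}

theorem treeFun_zero : treeFun 0 = 0 := by
  rw [treeFun, tsum_eq_single 0 fun n hn => by simp [hn]]
  simp

theorem treeFun_nonneg (hx : 0 ≤ x) : 0 ≤ treeFun x :=
  tsum_nonneg fun n => mul_nonneg (treeCoeff_nonneg n) (pow_nonneg hx n)

theorem summable_norm_treeCoeff_mul_pow (hx : |x| < exp (-1)) :
    Summable fun n => ‖treeCoeff n * x ^ n‖ :=
  summable_norm_mul_pow_of_abs_le_exp_one_pow (fun n => by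
    rw [abs_of_nonneg (treeCoeff_nonneg n)]
    exact (treeCoeff_le_natCast_mul n).trans (natCast_mul_treeCoeff_le n)) hx

theorem summable_norm_natCast_mul_treeCoeff_mul_pow (hx : |x| < exp (-1)) :
    Summable fun n => ‖n * treeCoeff n * x ^ n‖ :=
  summable_norm_mul_pow_of_abs_le_exp_one_pow (fun n => by
    rw [abs_of_nonneg (by have := treeCoeff_nonneg n; positivity)]
    exact natCast_mul_treeCoeff_le n) hx

theorem hasDerivAt_treeFun (hx : |x| < exp (-1)) :
    HasDerivAt treeFun (∑' n, treeCoeff n * (n * x ^ (n - 1))) x := by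
  obtain ⟨r, hxr, hr⟩ := exists_between hx
  have hr0 : 0 ≤ r := (abs_nonneg x).trans hxr.le
  refine hasDerivAt_tsum_mul_pow_s3 ((summable_norm_natCast_mul_treeCoeff_mul_pow
    (by rwa [abs_of_nonneg hr0])).congr fun n => ?_) hxr
  rw [Real.norm_eq_abs, abs_mul, abs_mul, abs_pow, abs_of_nonneg (treeCoeff_nonneg n),
    abs_of_nonneg hr0, Nat.abs_cast]
  ring

theorem deriv_treeFun_zero : deriv treeFun 0 = 1 := by
  rw [(hasDerivAt_treeFun (by simp [exp_pos])).deriv, tsum_eq_single 1 fun n hn => ?_]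
  · simp [treeCoeff_succ]
  · rcases n with _ | _ | n <;> simp_all

theorem mul_deriv_treeFun (hx : |x| < exp (-1)) :
    x * deriv treeFun x = ∑' n, n * treeCoeff n * x ^ n := by
  rw [(hasDerivAt_treeFun hx).deriv, ← tsum_mul_left]
  congr 1 with n
  cases n with
  | zero => simp
  | succ n => rw [Nat.add_sub_cancel, pow_succ]; ring

theorem treeFun_mul_tsum_natCast_mul (hx : |x| < exp (-1)) :
    treeFun x * ∑' n, n * treeCoeff n * x ^ n = ∑' n, n * treeCoeff n * x ^ n - treeFun x := by
  rw [treeFun, tsum_mul_tsum_eq_tsum_sum_range_of_summable_norm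
    (summable_norm_treeCoeff_mul_pow hx) (summable_norm_natCast_mul_treeCoeff_mul_pow hx),
    ← (summable_norm_natCast_mul_treeCoeff_mul_pow hx).of_norm.tsum_sub
      (summable_norm_treeCoeff_mul_pow hx).of_norm]
  congr 1 with n
  calc ∑ k ∈ range (n + 1), treeCoeff k * x ^ k * ((n - k : ℕ) * treeCoeff (n - k) * x ^ (n - k))
      = (∑ k ∈ range (n + 1), treeCoeff k * ((n - k : ℕ) * treeCoeff (n - k))) * x ^ n := by
        rw [sum_mul]
        refine sum_congr rfl fun k hk => ?_
        rw [← pow_mul_pow_sub x (Nat.lt_succ_iff.mp (mem_range.mp hk))]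
        ring
    _ = n * treeCoeff n * x ^ n - treeCoeff n * x ^ n := by
        rw [sum_range_treeCoeff_mul]; ring

theorem mul_deriv_treeFun_mul_one_sub_treeFun (hx : |x| < exp (-1)) :
    x * deriv treeFun x * (1 - treeFun x) = treeFun x := by
  have := treeFun_mul_tsum_natCast_mul hx
  rw [← mul_deriv_treeFun hx] at this
  linear_combination -this

theorem treeFun_lt_one (hx0 : 0 ≤ x) (hx : x < exp (-1)) : treeFun x < 1 := by
  have habs : |x| < exp (-1) := by rwa [abs_of_nonneg hx0]
  have hB : 0 ≤ x * deriv treeFun x := by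
    rw [mul_deriv_treeFun habs]
    exact tsum_nonneg fun n => by have := treeCoeff_nonneg n; positivity
  have := mul_deriv_treeFun_mul_one_sub_treeFun habs
  nlinarith [treeFun_nonneg hx0]

theorem treeFun_mul_exp_neg_treeFun (hx0 : 0 ≤ x) (hx : x < exp (-1)) :
    treeFun x * exp (-treeFun x) = x := by
  have hderiv : ∀ y, |y| < exp (-1) → HasDerivAt (fun y => treeFun y * exp (-treeFun y))
      (deriv treeFun y * (1 - treeFun y) * exp (-treeFun y)) y := fun y hy => by
    have hT := (hasDerivAt_treeFun hy).differentiableAt.hasDerivAt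
    exact (hT.mul hT.neg.exp).congr_deriv (by simp only [Pi.neg_apply]; ring)
  have hzero : HasDerivAt (fun y => treeFun y * exp (-treeFun y)) 1 0 := by
    simpa [treeFun_zero, deriv_treeFun_zero] using hderiv 0 (by simp [exp_pos])
  have hdiv : ∀ y ∈ Set.Ioo 0 (exp (-1)), HasDerivAt (fun y => treeFun y * exp (-treeFun y))
      (treeFun y * exp (-treeFun y) / y) y := fun y hy => by
    have hy' : |y| < exp (-1) := by rw [abs_of_pos hy.1]; exact hy.2
    refine (hderiv y hy').congr_deriv ?_
    rw [eq_div_iff hy.1.ne']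
    linear_combination exp (-treeFun y) * mul_deriv_treeFun_mul_one_sub_treeFun hy'
  rcases hx0.eq_or_lt with rfl | hx0
  · simp [treeFun_zero]
  simpa using eq_mul_of_hasDerivAt_eq_div (by simp [treeFun_zero]) hzero hdiv ⟨hx0, hx⟩

end treeFun

theorem treeFun_mul_exp_neg {β : ℝ} (hβ : β ∈ Set.Ico 0 1) : treeFun (β * exp (-β)) = β := by
  have hx0 : 0 ≤ β * exp (-β) := mul_nonneg hβ.1 (exp_pos _).le
  have hx : β * exp (-β) < exp (-1) := by
    simpa using strictMonoOn_mul_exp_neg (Set.Ico_subset_Icc_self hβ) ⟨zero_le_one, le_rfl⟩ hβ.2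
  exact strictMonoOn_mul_exp_neg.injOn
    ⟨treeFun_nonneg hx0, (treeFun_lt_one hx0 hx).le⟩ (Set.Ico_subset_Icc_self hβ)
    (treeFun_mul_exp_neg_treeFun hx0 hx)

theorem tsum_borel_eq_treeFun_div {α : ℝ} (hα : α ≠ 0) :
    ∑' n : ℕ, exp (-(α * (n + 1))) * (α * (n + 1)) ^ n / (n + 1)! =
      treeFun (α * exp (-α)) / α := by
  rw [treeFun, ← (add_left_injective 1).tsum_eq (f := fun n => treeCoeff n * _ ^ n)
    fun n hn => ⟨n - 1, by cases n <;> simp_all⟩, ← tsum_div_const]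
  congr 1 with n
  rw [treeCoeff_succ, mul_pow, mul_pow, ← exp_nat_mul]
  field_simp
  push_cast
  ring

theorem borel_total_mass_supercritical_general
    (α : ℝ) (p : ℝ) (hp : p ∈ Set.Ioo (0 : ℝ) 1)
    (hroot : α * p + Real.log (1 - p) = 0) :
    ∑' n : ℕ, Real.exp (-(α * (n + 1))) * (α * (n + 1)) ^ n / (Nat.factorial (n + 1) : ℝ) = 1 - p := by
  obtain ⟨hp0, hp1⟩ := hp
  have hq : 0 < 1 - p := by linarith
  have hαp : 0 < α * p := by linarith [Real.log_neg hq (by linarith : 1 - p < 1)]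
  have hα : 0 < α := pos_of_mul_pos_left hαp hp0.le
  have hexp : exp (α * p) = (1 - p)⁻¹ := by
    rw [show α * p = -Real.log (1 - p) by linarith, exp_neg, exp_log hq]
  have hβ : α * (1 - p) < 1 := by
    have h := add_one_lt_exp hαp.ne'
    rw [hexp, ← one_div, lt_div_iff₀ hq] at h
    nlinarith
  have hβexp : α * (1 - p) * exp (-(α * (1 - p))) = α * exp (-α) := by
    rw [show -(α * (1 - p)) = -α + α * p by ring, exp_add, hexp]
    field_simp
  have hT := treeFun_mul_exp_neg ⟨(mul_pos hα hq).le, hβ⟩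
  rw [hβexp] at hT
  rw [tsum_borel_eq_treeFun_div hα.ne', hT]
  field_simp

/-- If `α > 0` and `p ∈ (0,1)` satisfies `αp + log(1-p) = 0`, then the total mass of
the Borel(α) distribution on finite values is `1 - p`:
`∑_{n≥1} e^{-αn}(αn)^{n-1}/n! = 1 - p`. -/
theorem borel_total_mass_supercritical
    (α : ℝ) (hα : 0 < α) (p : ℝ) (hp : p ∈ Set.Ioo (0 : ℝ) 1)
    (hroot : α * p + Real.log (1 - p) = 0) :
    ∑' n : ℕ, Real.exp (-(α * (n + 1))) * (α * (n + 1)) ^ n / (Nat.factorial (n + 1) : ℝ) = 1 - p :=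
  borel_total_mass_supercritical_general α p hp hroot
end

section
/- Let β_1 > 0, β_2 ≥ 0, and let t* = inf{t ≥ 0 : β_1 + 2β_2 t + log(1-t) < 0} ∈ [0,1). Let F: [0,1] → [0,1] be the probability generating function of the Borel(2β_2) distribution, characterized as the minimal solution of F(s) = s·exp(2β_2(F(s) - 1)). Then F(e^{-β_1}) = 1 - t*. -/
open Real Set Topology

/-! With `g t = β₁ + 2β₂ t + log (1 - t)`, the fixed-point equation for `x = F (e^{-β₁})` says
exactly `g (1 - x) = 0`, and `t*` is a zero of `g` by continuity. Since `g` is concave on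
`(-∞, 1)` with `g 0 = β₁ > 0`, it has at most one zero in `[0, 1)`, so `t* = 1 - x`. -/

theorem concaveOn_log_one_sub : ConcaveOn ℝ (Iio 1) fun t : ℝ => log (1 - t) := by
  have h := strictConcaveOn_log_Ioi.concaveOn.comp_affineMap
    (AffineMap.const ℝ ℝ (1 : ℝ) - AffineMap.id ℝ ℝ)
  have hdom : ⇑(AffineMap.const ℝ ℝ (1 : ℝ) - AffineMap.id ℝ ℝ) ⁻¹' Ioi 0 = Iio 1 := by
    ext t; simp
  rw [hdom] at h
  exact h.congr fun t _ => by simp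

theorem concaveOn_add_mul_add_log_one_sub (b c : ℝ) :
    ConcaveOn ℝ (Iio 1) fun t : ℝ => b + c * t + log (1 - t) :=
  ((((LinearMap.mul ℝ ℝ c).concaveOn (convex_Iio 1)).add_const b).add
    concaveOn_log_one_sub).congr fun t _ => by simp [add_comm]

theorem ConcaveOn.pos_of_pos_of_nonneg {s : Set ℝ} {f : ℝ → ℝ} (hf : ConcaveOn ℝ s f)
    {a b c : ℝ} (ha : a ∈ s) (hc : c ∈ s) (hab : a ≤ b) (hbc : b < c) (hfa : 0 < f a)
    (hfc : 0 ≤ f c) : 0 < f b := by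
  rcases hab.eq_or_lt with rfl | hab
  · exact hfa
  by_contra! hfb
  have hb : b ∈ openSegment ℝ a c := by rw [openSegment_eq_Ioo (hab.trans hbc)]; exact ⟨hab, hbc⟩
  linarith [hf.lt_right_of_left_lt ha hc hb (hfb.trans_lt hfa)]

theorem ConcaveOn.eq_of_apply_eq_zero {s : Set ℝ} {f : ℝ → ℝ} (hf : ConcaveOn ℝ s f)
    {a b c : ℝ} (ha : a ∈ s) (hb : b ∈ s) (hc : c ∈ s) (hab : a ≤ b) (hac : a ≤ c)
    (hfa : 0 < f a) (hfb : f b = 0) (hfc : f c = 0) : b = c := by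
  rcases lt_trichotomy b c with hbc | hbc | hbc
  · exact absurd hfb (hf.pos_of_pos_of_nonneg ha hc hab hbc hfa hfc.ge).ne'
  · exact hbc
  · exact absurd hfc (hf.pos_of_pos_of_nonneg ha hb hac hbc hfa hfb.ge).ne'

theorem apply_sInf_eq_zero {g : ℝ → ℝ} (hne : {t | 0 ≤ t ∧ g t < 0}.Nonempty) (h0 : 0 ≤ g 0)
    (hg : ContinuousAt g (sInf {t | 0 ≤ t ∧ g t < 0})) :
    g (sInf {t | 0 ≤ t ∧ g t < 0}) = 0 := by
  set S := {t | 0 ≤ t ∧ g t < 0}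
  have hbdd : BddBelow S := ⟨0, fun t ht => ht.1⟩
  refine le_antisymm ?_ (not_lt.1 fun hneg => ?_)
  · exact ContinuousWithinAt.closure_le (csInf_mem_closure hne hbdd) hg.continuousWithinAt
      continuousWithinAt_const fun t ht => ht.2.le
  have hpos : 0 < sInf S :=
    (le_csInf hne fun t ht => ht.1).lt_of_ne fun h => by rw [← h] at hneg; linarith
  have hnear : ∀ᶠ t in 𝓝[<] sInf S, g t < 0 ∧ 0 < t :=
    ((hg.eventually (gt_mem_nhds hneg)).and (lt_mem_nhds hpos)).filter_mono nhdsWithin_le_nhds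
  obtain ⟨t, ⟨hgt, ht0⟩, hlt⟩ := (hnear.and self_mem_nhdsWithin).exists
  exact (csInf_le hbdd ⟨ht0.le, hgt⟩).not_gt hlt

theorem add_mul_add_log_eq_zero_of_eq_exp_mul_exp {b c x : ℝ}
    (h : x = exp (-b) * exp (c * (x - 1))) : b + c * (1 - x) + log (1 - (1 - x)) = 0 := by
  rw [sub_sub_cancel]
  nth_rw 2 [h]
  rw [← exp_add, log_exp]; ring

theorem borel_pgf_at_exp_neg_beta_one_general
    (β₁ β₂ : ℝ) (hβ₁ : 0 < β₁)
    (tstar : ℝ)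
    (htstar : tstar = sInf {t : ℝ | 0 ≤ t ∧ β₁ + 2 * β₂ * t + Real.log (1 - t) < 0})
    (F : ℝ → ℝ)
    (hF : ∀ s ∈ Icc (0 : ℝ) 1,
      F s ∈ Icc (0 : ℝ) 1 ∧ F s = s * Real.exp (2 * β₂ * (F s - 1)) ∧
        ∀ x ∈ Icc (0 : ℝ) 1, x = s * Real.exp (2 * β₂ * (x - 1)) → F s ≤ x) :
    F (Real.exp (-β₁)) = 1 - tstar := by
  set g : ℝ → ℝ := fun t => β₁ + 2 * β₂ * t + log (1 - t)
  have hg : ConcaveOn ℝ (Iio 1) g := concaveOn_add_mul_add_log_one_sub β₁ (2 * β₂)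
  have hg0 : 0 < g 0 := by simpa [g] using hβ₁
  obtain ⟨⟨-, hF1⟩, hFeq, -⟩ := hF _ ⟨(exp_pos _).le, exp_le_one_iff.2 (neg_nonpos.2 hβ₁.le)⟩
  have hFpos : 0 < F (exp (-β₁)) := hFeq ▸ by positivity
  set u := 1 - F (exp (-β₁))
  have hgu : g u = 0 := add_mul_add_log_eq_zero_of_eq_exp_mul_exp hFeq
  have hu0 : 0 ≤ u := by linarith
  have hu1 : u < 1 := by linarith
  have hv : (u + 1) / 2 ∈ {t | 0 ≤ t ∧ g t < 0} := ⟨by linarith, not_le.1 fun h =>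
    (hg.pos_of_pos_of_nonneg (mem_Iio.2 one_pos) (mem_Iio.2 (by linarith)) hu0 (by linarith)
      hg0 h).ne' hgu⟩
  have ht0 : 0 ≤ tstar := htstar ▸ le_csInf ⟨_, hv⟩ fun t ht => ht.1
  have ht1 : tstar < 1 := htstar ▸ (csInf_le ⟨0, fun t ht => ht.1⟩ hv).trans_lt (by linarith)
  have hgt : g tstar = 0 := htstar ▸ apply_sInf_eq_zero ⟨_, hv⟩ hg0.le
    (htstar ▸ by fun_prop (disch := linarith))
  linarith [hg.eq_of_apply_eq_zero (mem_Iio.2 one_pos) ht1 hu1 ht0 hu0 hg0 hgt hgu]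

/-- Let `β₁ > 0`, `β₂ ≥ 0` and `t* = inf {t ≥ 0 : β₁ + 2β₂ t + log(1-t) < 0} ∈ [0,1)`.
If `F` is the probability generating function of the Borel(2β₂) distribution,
characterized on `[0,1]` as the minimal solution in `[0,1]` of
`F(s) = s exp(2β₂ (F(s) - 1))`, then `F(e^{-β₁}) = 1 - t*`. -/
theorem borel_pgf_at_exp_neg_beta_one
    (β₁ β₂ : ℝ) (hβ₁ : 0 < β₁) (hβ₂ : 0 ≤ β₂)
    (tstar : ℝ)
    (htstar : tstar = sInf {t : ℝ | 0 ≤ t ∧ β₁ + 2 * β₂ * t + Real.log (1 - t) < 0})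
    (hts : tstar ∈ Ico (0 : ℝ) 1)
    (F : ℝ → ℝ)
    (hF : ∀ s ∈ Icc (0 : ℝ) 1,
      F s ∈ Icc (0 : ℝ) 1 ∧ F s = s * Real.exp (2 * β₂ * (F s - 1)) ∧
        ∀ x ∈ Icc (0 : ℝ) 1, x = s * Real.exp (2 * β₂ * (x - 1)) → F s ≤ x) :
    F (Real.exp (-β₁)) = 1 - tstar :=
  borel_pgf_at_exp_neg_beta_one_general β₁ β₂ hβ₁ tstar htstar F hF
end

section
/- In a finite graph with patches (1-edges), run the collapse algorithm: repeatedly pick a vertex with a patch, delete the vertex and the patch, and collapse edges over it. Then a vertex is identifiable if and only if its connected component (in the graph of 2-edges) contains a vertex with a patch. -/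
/-- A vertex is identifiable in the hypergraph `Λ` if it can be removed by the
collapse algorithm: `v` is identifiable iff there is a hyperedge `A ∋ v`
(i.e. `Λ A ≥ 1`) all of whose other vertices are identifiable. -/
inductive Ident {V : Type*} (Λ : Finset V → ℕ) : V → Prop
  | intro (A : Finset V) (v : V) (hv : v ∈ A) (hΛ : 1 ≤ Λ A)
      (h : ∀ w ∈ A, w ≠ v → Ident Λ w) : Ident Λ v

/-- In a finite graph with patches (a hypergraph with only 1-edges and 2-edges),
a vertex is identifiable iff its connected component in the graph of 2-edges
contains a vertex carrying a patch. -/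
theorem ident_iff_component_has_patch
    {V : Type*} [Fintype V] [DecidableEq V] (Λ : Finset V → ℕ)
    (hgraph : ∀ A : Finset V, 1 ≤ Λ A → A.card = 1 ∨ A.card = 2) (v : V) :
    Ident Λ v ↔
      ∃ w : V, 1 ≤ Λ {w} ∧
        Relation.ReflTransGen (fun a b : V => a ≠ b ∧ 1 ≤ Λ {a, b}) v w := by
  constructor
  · intro h
    induction h with
    | intro A v hv hΛ h ih =>
      rcases hgraph A hΛ with h1 | h2
      · obtain ⟨a, ha⟩ := Finset.card_eq_one.mp h1
        subst ha
        rw [Finset.mem_singleton] at hv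
        subst hv
        exact ⟨v, hΛ, Relation.ReflTransGen.refl⟩
      · obtain ⟨a, b, hab, hA⟩ := Finset.card_eq_two.mp h2
        subst hA
        rw [Finset.mem_insert, Finset.mem_singleton] at hv
        rcases hv with rfl | rfl
        · obtain ⟨w, hw, hr⟩ := ih b (by simp) (Ne.symm hab)
          exact ⟨w, hw, Relation.ReflTransGen.head ⟨hab, hΛ⟩ hr⟩
        · obtain ⟨w, hw, hr⟩ := ih a (by simp) hab
          refine ⟨w, hw, Relation.ReflTransGen.head ⟨Ne.symm hab, ?_⟩ hr⟩
          rwa [Finset.pair_comm]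
  · rintro ⟨w, hw, hr⟩
    induction hr using Relation.ReflTransGen.head_induction_on with
    | refl => exact Ident.intro {w} w (by simp) hw (by simp)
    | head hab _ ih =>
      rename_i a b _
      refine Ident.intro {a, b} a (by simp) hab.2 ?_
      intro u hu hne
      rw [Finset.mem_insert, Finset.mem_singleton] at hu
      rcases hu with rfl | rfl
      · exact absurd rfl hne
      · exact ih
end

section
/- In the collapse setting, a k-set A with Λ(A) = 1 is essential (i.e. V*(Λ𝟙_{{A}^C}) ≠ V*(Λ)) if and only if exactly one vertex of A is not identifiable in the hypergraph with the hyperedge over A removed, i.e. |A \ V*(Λ𝟙_{{A}^C})| = 1. Moreover a set with Λ(A) ≠ 1 is never essential. -/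
/-- The set `V*(Λ)` of identifiable vertices. -/
def identSet {V : Type*} (Λ : Finset V → ℕ) : Set V := {v | Ident Λ v}

/-! Removing one hyperedge over `A` can only affect the collapse at a step that uses `A`, and such
a step survives unless the vertex it removes is the only vertex of `A` that is not identifiable
without `A`. So the identifiable set shrinks exactly when `A` has a single such vertex (which
then witnesses the change). Identifiability depends only on the support of `Λ`, which is unchanged
when `Λ(A) ≠ 1`. -/

section

variable {V : Type*} {Λ Λ' : Finset V → ℕ}

lemma Ident.mono (hle : ∀ B, 1 ≤ Λ B → 1 ≤ Λ' B) {v : V} (h : Ident Λ v) : Ident Λ' v := by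
  induction h with
  | intro B v hv hΛB _ ih => exact Ident.intro B v hv (hle B hΛB) ih

lemma identSet_mono (hle : Λ ≤ Λ') : identSet Λ ⊆ identSet Λ' :=
  fun _ => Ident.mono fun B hB => hB.trans (hle B)

lemma identSet_congr (h : ∀ B, 1 ≤ Λ B ↔ 1 ≤ Λ' B) : identSet Λ = identSet Λ' :=
  Set.ext fun _ => ⟨Ident.mono fun B => (h B).1, Ident.mono fun B => (h B).2⟩

lemma Ident.of_diff_ne_singleton {A : Finset V} (hne : ∀ B ≠ A, 1 ≤ Λ B → 1 ≤ Λ' B)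
    (hA : ∀ a, (A : Set V) \ identSet Λ' ≠ {a}) {v : V} (h : Ident Λ v) : Ident Λ' v := by
  induction h with
  | intro B v hv hΛB _ ih =>
    by_cases hBA : B = A
    · subst hBA
      by_contra hv'
      refine hA v (Set.eq_singleton_iff_unique_mem.2 ⟨⟨hv, hv'⟩, fun w hw => ?_⟩)
      by_contra hwv
      exact hw.2 (ih w hw.1 hwv)
    · exact Ident.intro B v hv (hne B hBA hΛB) ih

lemma ident_of_diff_eq_singleton {A : Finset V} {a : V} (hle : Λ' ≤ Λ) (hΛA : 1 ≤ Λ A)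
    (ha : (A : Set V) \ identSet Λ' = {a}) : Ident Λ a := by
  have haA : a ∈ (A : Set V) \ identSet Λ' := ha.symm ▸ Set.mem_singleton a
  refine Ident.intro A a haA.1 hΛA fun w hw hwa => identSet_mono hle ?_
  by_contra hw'
  have hw'' : w ∈ (A : Set V) \ identSet Λ' := ⟨hw, hw'⟩
  rw [ha] at hw''
  exact hwa hw''

end

theorem essential_iff_one_not_identifiable_general
    {V : Type*} [DecidableEq V] (Λ : Finset V → ℕ) (A : Finset V) :
    (Λ A = 1 →
      (identSet (Function.update Λ A (Λ A - 1)) ≠ identSet Λ ↔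
        ((A : Set V) \ identSet (Function.update Λ A (Λ A - 1))).ncard = 1)) ∧
    (Λ A ≠ 1 → identSet (Function.update Λ A (Λ A - 1)) = identSet Λ) := by
  set Λ' := Function.update Λ A (Λ A - 1)
  have hle : Λ' ≤ Λ := update_le_self_iff.2 (Nat.sub_le _ _)
  have hne : ∀ B ≠ A, 1 ≤ Λ B → 1 ≤ Λ' B := fun B hB h => by
    rwa [show Λ' B = Λ B from Function.update_of_ne hB _ _]
  refine ⟨fun hA1 => ⟨fun hess => ?_, fun hcard heq => ?_⟩, fun hA1 => ?_⟩
  · by_contra hcard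
    refine hess (subset_antisymm (identSet_mono hle) fun v hv => ?_)
    exact hv.of_diff_ne_singleton hne fun a ha => hcard (Set.ncard_eq_one.2 ⟨a, ha⟩)
  · obtain ⟨a, ha⟩ := Set.ncard_eq_one.1 hcard
    have haA : a ∈ (A : Set V) \ identSet Λ' := ha.symm ▸ Set.mem_singleton a
    exact haA.2 (heq ▸ ident_of_diff_eq_singleton hle hA1.ge ha)
  · refine identSet_congr fun B => ?_
    by_cases hBA : B = A
    · subst hBA
      simp only [Λ', Function.update_self]
      omega
    · simp only [Λ', Function.update_of_ne hBA]

/-- A set `A` with `Λ(A) = 1` is essential (removing its hyperedge changes the set of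
identifiable vertices) iff exactly one vertex of `A` is not identifiable in the
hypergraph with the hyperedge over `A` removed.  A set with `Λ(A) ≠ 1` is never
essential (removing one hyperedge over it changes nothing). -/
theorem essential_iff_one_not_identifiable
    {V : Type*} [Fintype V] [DecidableEq V] (Λ : Finset V → ℕ) (A : Finset V) :
    (Λ A = 1 →
      (identSet (Function.update Λ A (Λ A - 1)) ≠ identSet Λ ↔
        ((A : Set V) \ identSet (Function.update Λ A (Λ A - 1))).ncard = 1)) ∧
    (Λ A ≠ 1 → identSet (Function.update Λ A (Λ A - 1)) = identSet Λ) :=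
  essential_iff_one_not_identifiable_general Λ A
end

section
/- In the collapse setting on a finite hypergraph Λ, adding one extra patch at a vertex v can only enlarge the set of identifiable vertices, and the set of identifiable vertices V*(Λ) is monotone in Λ: if Λ ≤ Λ' pointwise then V*(Λ) ⊆ V*(Λ'). -/
/-- The identifiable set is monotone in the hypergraph: if `Λ ≤ Λ'` pointwise then
`V*(Λ) ⊆ V*(Λ')`.  In particular adding one extra patch at a vertex `x` can only
enlarge the set of identifiable vertices. -/
theorem identSet_monotone
    {V : Type*} [Fintype V] [DecidableEq V] :
    (∀ Λ Λ' : Finset V → ℕ, (∀ A, Λ A ≤ Λ' A) → identSet Λ ⊆ identSet Λ') ∧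
    (∀ (Λ : Finset V → ℕ) (x : V),
      identSet Λ ⊆ identSet (Function.update Λ {x} (Λ {x} + 1))) := by
  have mono : ∀ Λ Λ' : Finset V → ℕ, (∀ A, Λ A ≤ Λ' A) → identSet Λ ⊆ identSet Λ' := by
    intro Λ Λ' h v hv
    induction hv with
    | intro A v hvA hΛ hw ih =>
      exact Ident.intro A v hvA (le_trans hΛ (h A)) fun w hwA hne => ih w hwA hne
  refine ⟨mono, fun Λ x => mono Λ _ fun A => ?_⟩
  rcases eq_or_ne A {x} with rfl | hne
  · simp
  · simp [Function.update_of_ne hne]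
end
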